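/- arXiv:1302.2528 — 3 statements merged into one kernel-verified Lean document; each statement's English description precedes it below -/
import Mathlib

section
/- Let d_0 > d_1 > ... > d_n be a sequence of positive integers with d_n = 1 and d_i dividing d_{i-1} for each i, and let Λ_0, Λ_1, ..., Λ_n be positive integers with d_i = gcd(Λ_0, ..., Λ_i) for each i (where d_0 = Λ_0), such that for each k ≥ 1, Λ_k / d_k lies in the semigroup generated by Λ_0/d_{k-1}, ..., Λ_{k-1}/d_{k-1}. Then the conductor of the numerical semigroup S generated by Λ_0, ..., Λ_n equals ∑_{k=1}^{n} (d_{k-1}/d_k - 1) Λ_k - Λ_0 + 1. -/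
/-!
Write `S_k` for the semigroup generated by `Λ_0 / d_k, …, Λ_k / d_k`. Since `d_{k+1}` divides
`d_k`, we have `S_{k+1} = e S_k + ℕ a` with `e = d_k / d_{k+1}` and `a = Λ_{k+1} / d_{k+1}`;
these are coprime, and the telescopic condition says `a ∈ S_k`. For such a gluing the conductor
is `e c + (e - 1)(a - 1)`, where `c` is the conductor of `S_k`: above this bound, choose
`m < e` with `m a ≡ x (mod e)`, so that `x - m a` is a multiple `e q` with `q ≥ c`; conversely a
representation of the bound minus one would force `c - 1 ∈ S_k`. Starting from `S_0 = ℕ` and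
iterating up to `S_n = S` gives the formula.
-/

def IsConductor (S : AddSubmonoid ℕ) (c : ℕ) : Prop :=
  IsLeast {c' : ℕ | ∀ x, c' ≤ x → x ∈ S} c

theorem mem_map_mulLeft_sup_closure_singleton {T : AddSubmonoid ℕ} {e a x : ℕ} :
    x ∈ T.map (AddMonoidHom.mulLeft e) ⊔ AddSubmonoid.closure {a} ↔
      ∃ t ∈ T, ∃ m : ℕ, x = e * t + m * a := by
  simp only [AddSubmonoid.mem_sup, AddSubmonoid.mem_map, AddSubmonoid.mem_closure_singleton,
    AddMonoidHom.coe_mulLeft, smul_eq_mul]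
  constructor
  · rintro ⟨_, ⟨t, ht, rfl⟩, _, ⟨m, rfl⟩, rfl⟩
    exact ⟨t, ht, m, rfl⟩
  · rintro ⟨t, ht, m, rfl⟩
    exact ⟨_, ⟨t, ht, rfl⟩, _, ⟨m, rfl⟩, rfl⟩

theorem exists_lt_mul_modEq {e a : ℕ} (he : 0 < e) (hcop : e.Coprime a) (x : ℕ) :
    ∃ m < e, m * a ≡ x [MOD e] := by
  have : NeZero e := ⟨he.ne'⟩
  refine ⟨((x : ZMod e) * ↑(ZMod.unitOfCoprime a hcop.symm)⁻¹).val, ZMod.val_lt _, ?_⟩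
  rw [← ZMod.natCast_eq_natCast_iff]
  push_cast [ZMod.natCast_val, ZMod.cast_id]
  rw [mul_assoc, ← ZMod.coe_unitOfCoprime a hcop.symm, Units.inv_mul, mul_one]

theorem exists_mul_add_mul_eq_of_le {T : AddSubmonoid ℕ} {c e a x : ℕ} (he : 0 < e)
    (hcop : e.Coprime a) (hT : ∀ y, c ≤ y → y ∈ T) (hx : e * c + (e - 1) * (a - 1) ≤ x) :
    ∃ t ∈ T, ∃ m : ℕ, x = e * t + m * a := by
  obtain ⟨m, hme, hm⟩ := exists_lt_mul_modEq he hcop x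
  have hma : m * a ≤ (e - 1) * (a - 1) + (e - 1) := by
    calc m * a ≤ (e - 1) * (a - 1 + 1) := Nat.mul_le_mul (by omega) (by omega)
      _ = _ := mul_add_one _ _
  have hmx : m * a ≤ x := by
    by_contra! hlt
    have := Nat.le_of_dvd (Nat.sub_pos_of_lt hlt) ((Nat.modEq_iff_dvd' hlt.le).mp hm.symm)
    omega
  obtain ⟨q, hq⟩ := (Nat.modEq_iff_dvd' hmx).mp hm
  have hqc : e * c < e * (q + 1) := by rw [mul_add_one]; omega
  exact ⟨q, hT q (by have := Nat.lt_of_mul_lt_mul_left hqc; omega), m, by omega⟩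

theorem exists_add_one_eq_of_mul_add_mul_add_one_eq {T : AddSubmonoid ℕ} {c e a t m : ℕ}
    (he : 0 < e) (ha : 0 < a) (hcop : e.Coprime a) (haT : a ∈ T) (ht : t ∈ T)
    (h : e * t + m * a + 1 = e * c + (e - 1) * (a - 1)) : ∃ s ∈ T, s + 1 = c := by
  have hsum : e * (t + 1) + (m + 1) * a = e * (c + a) := by
    obtain ⟨e, rfl⟩ := Nat.exists_eq_add_one_of_ne_zero he.ne'
    obtain ⟨a, rfl⟩ := Nat.exists_eq_add_one_of_ne_zero ha.ne'
    simp only [Nat.add_sub_cancel] at h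
    linarith
  obtain ⟨q, hq⟩ : e ∣ m + 1 := hcop.dvd_of_dvd_mul_right <|
    (Nat.dvd_add_right (dvd_mul_right e _)).mp (hsum ▸ dvd_mul_right e _)
  have hq0 : 0 < q := Nat.pos_of_ne_zero (by rintro rfl; simp at hq)
  have hcancel : t + 1 + q * a = c + a :=
    Nat.eq_of_mul_eq_mul_left he (by rw [← hsum, hq]; ring)
  refine ⟨t + (q - 1) * a, T.add_mem ht (by simpa using T.nsmul_mem haT (q - 1)), ?_⟩
  have : q * a = (q - 1) * a + a := by rw [← add_one_mul, Nat.sub_one_add_one hq0.ne']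
  omega

theorem IsConductor.map_mulLeft_sup_closure_singleton {T : AddSubmonoid ℕ} {c e a : ℕ}
    (hc : IsConductor T c) (he : 0 < e) (ha : 0 < a) (haT : a ∈ T) (hcop : e.Coprime a) :
    IsConductor (T.map (AddMonoidHom.mulLeft e) ⊔ AddSubmonoid.closure {a})
      (e * c + (e - 1) * (a - 1)) := by
  simp only [IsConductor, mem_map_mulLeft_sup_closure_singleton]
  refine ⟨fun x hx => exists_mul_add_mul_eq_of_le he hcop hc.1 hx, fun c' hc' => ?_⟩
  by_contra! hlt
  obtain ⟨t, ht, m, hx⟩ := hc' (e * c + (e - 1) * (a - 1) - 1) (Nat.le_sub_one_of_lt hlt)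
  obtain ⟨s, hs, rfl⟩ :=
    exists_add_one_eq_of_mul_add_mul_add_one_eq (c := c) (m := m) he ha hcop haT ht (by omega)
  have : s + 1 ≤ s := hc.2 fun x hx => by
    obtain rfl | hx := hx.eq_or_lt
    · exact hs
    · exact hc.1 x hx
  omega

namespace Telescopic

variable {n : ℕ} {Λ d : ℕ → ℕ}

def partialClosure (Λ d : ℕ → ℕ) (k : ℕ) : AddSubmonoid ℕ :=
  AddSubmonoid.closure {x | ∃ j ≤ k, x = Λ j / d k}

theorem dvd_of_le (hd : ∀ i, i ≤ n → d i = (Finset.range (i + 1)).gcd Λ) {i j : ℕ}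
    (hi : i ≤ n) (hj : j ≤ i) : d i ∣ Λ j := by
  rw [hd i hi]
  exact Finset.gcd_dvd (by simpa [Nat.lt_succ_iff])

theorem gcd_eq_succ (hd : ∀ i, i ≤ n → d i = (Finset.range (i + 1)).gcd Λ) {k : ℕ}
    (hk : k + 1 ≤ n) : (d k).gcd (Λ (k + 1)) = d (k + 1) := by
  rw [hd (k + 1) hk, hd k (by omega), Finset.range_add_one (n := k + 1), Finset.gcd_insert,
    gcd_comm]
  rfl

theorem partialClosure_succ {k : ℕ} (hpos : 0 < d k) (hdd : d (k + 1) ∣ d k)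
    (hΛ : ∀ j ≤ k, d k ∣ Λ j) :
    partialClosure Λ d (k + 1) =
      (partialClosure Λ d k).map (AddMonoidHom.mulLeft (d k / d (k + 1))) ⊔
        AddSubmonoid.closure {Λ (k + 1) / d (k + 1)} := by
  have hscale : ∀ j ≤ k, d k / d (k + 1) * (Λ j / d k) = Λ j / d (k + 1) := by
    intro j hj
    obtain ⟨w, hw⟩ := hΛ j hj
    rw [hw, Nat.mul_div_cancel_left _ hpos, Nat.div_mul_right_comm hdd]
  rw [partialClosure, partialClosure, AddMonoidHom.map_mclosure, ← AddSubmonoid.closure_union]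
  congr 1
  ext x
  simp only [Set.mem_ofPred_eq, Set.mem_union, Set.mem_image, Set.mem_singleton_iff,
    AddMonoidHom.coe_mulLeft]
  constructor
  · rintro ⟨j, hj, rfl⟩
    obtain hj | rfl := Nat.le_succ_iff.mp hj
    · exact Or.inl ⟨_, ⟨j, hj, rfl⟩, hscale j hj⟩
    · exact Or.inr rfl
  · rintro (⟨_, ⟨j, hj, rfl⟩, rfl⟩ | rfl)
    · exact ⟨j, hj.trans k.le_succ, hscale j hj⟩
    · exact ⟨k + 1, le_rfl, rfl⟩

/-- Multiplying by `d k` clears the denominators of the conductor formula for `partialClosure`. -/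
theorem exists_isConductor_partialClosure (hpos : ∀ i, i ≤ n → 0 < Λ i)
    (hd : ∀ i, i ≤ n → d i = (Finset.range (i + 1)).gcd Λ)
    (htel : ∀ k, 1 ≤ k → k ≤ n →
      Λ k / d k ∈ AddSubmonoid.closure {x : ℕ | ∃ j < k, x = Λ j / d (k - 1)}) :
    ∀ k ≤ n, ∃ c, IsConductor (partialClosure Λ d k) c ∧
      (c : ℤ) * d k =
        ∑ j ∈ Finset.Icc 1 k, ((d (j - 1) / d j : ℕ) - 1 : ℤ) * Λ j - Λ 0 + d k := by
  intro k
  induction k with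
  | zero =>
    intro hn
    have hd0 : d 0 = Λ 0 := by simp [hd 0 hn]
    refine ⟨0, ⟨fun x _ => ?_, fun _ _ => Nat.zero_le _⟩, by simp [hd0]⟩
    simp [partialClosure, hd0, Nat.div_self (hpos 0 hn)]
  | succ k ih =>
    intro hk
    obtain ⟨c, hc, hval⟩ := ih (by omega)
    have hdk : 0 < d k :=
      Nat.pos_of_dvd_of_pos (dvd_of_le hd (by omega) k.zero_le) (hpos 0 n.zero_le)
    have hg := gcd_eq_succ hd hk
    have hdd : d (k + 1) ∣ d k := hg ▸ Nat.gcd_dvd_left _ _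
    have hdk1 : 0 < d (k + 1) := Nat.pos_of_dvd_of_pos hdd hdk
    have hΛd : d (k + 1) ∣ Λ (k + 1) := dvd_of_le hd hk le_rfl
    set e := d k / d (k + 1)
    set a := Λ (k + 1) / d (k + 1)
    have hcop : e.Coprime a := by
      simpa only [hg] using Nat.coprime_div_gcd_div_gcd (m := d k) (n := Λ (k + 1)) (hg ▸ hdk1)
    have he : 0 < e := Nat.div_pos (Nat.le_of_dvd hdk hdd) hdk1
    have ha : 0 < a := Nat.div_pos (Nat.le_of_dvd (hpos _ hk) hΛd) hdk1
    have haT : a ∈ partialClosure Λ d k := by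
      simpa [partialClosure, Nat.lt_succ_iff] using htel (k + 1) (by omega) hk
    refine ⟨e * c + (e - 1) * (a - 1), ?_, ?_⟩
    · rw [partialClosure_succ hdk hdd fun j hj => dvd_of_le hd (by omega) hj]
      exact hc.map_mulLeft_sup_closure_singleton he ha haT hcop
    · have hed : (e : ℤ) * d (k + 1) = d k := by exact_mod_cast Nat.div_mul_cancel hdd
      have had : (a : ℤ) * d (k + 1) = Λ (k + 1) := by exact_mod_cast Nat.div_mul_cancel hΛd
      rw [Finset.sum_Icc_succ_top (by omega), Nat.add_sub_cancel]
      simp only [Nat.cast_add, Nat.cast_mul, Nat.cast_sub he, Nat.cast_sub ha, Nat.cast_one]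
      linear_combination c * hed + hval + (e - 1 : ℤ) * had - hed

end Telescopic

theorem stmt_2_general (n : ℕ) (Λ : ℕ → ℕ)
    (hpos : ∀ i, i ≤ n → 0 < Λ i)
    (d : ℕ → ℕ)
    (hd : ∀ i, i ≤ n → d i = (Finset.range (i + 1)).gcd Λ)
    (hdn : d n = 1)
    (htel : ∀ k, 1 ≤ k → k ≤ n →
      Λ k / d k ∈ AddSubmonoid.closure {x : ℕ | ∃ j < k, x = Λ j / d (k - 1)})
    (S : AddSubmonoid ℕ)
    (hS : S = AddSubmonoid.closure {x : ℕ | ∃ i ≤ n, x = Λ i}) :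
    ∃ c : ℕ, IsLeast {c' : ℕ | ∀ x : ℕ, c' ≤ x → x ∈ S} c ∧
      (c : ℤ) = (∑ k ∈ Finset.Icc 1 n, ((d (k - 1) / d k : ℕ) - 1 : ℤ) * (Λ k : ℤ))
        - (Λ 0 : ℤ) + 1 := by
  obtain ⟨c, hc, hval⟩ := Telescopic.exists_isConductor_partialClosure hpos hd htel n le_rfl
  have hSn : Telescopic.partialClosure Λ d n = S := by simp [Telescopic.partialClosure, hdn, hS]
  exact ⟨c, hSn ▸ hc, by simpa [hdn] using hval⟩

/-- Brauer's conductor formula for telescopic numerical semigroups: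
the conductor of `⟨Λ_0, …, Λ_n⟩` equals `∑_{k=1}^n (d_{k-1}/d_k - 1) Λ_k - Λ_0 + 1`. -/
theorem stmt_2 (n : ℕ) (hn : 1 ≤ n) (Λ : ℕ → ℕ)
    (hpos : ∀ i, i ≤ n → 0 < Λ i)
    (d : ℕ → ℕ)
    (hd : ∀ i, i ≤ n → d i = (Finset.range (i + 1)).gcd Λ)
    (hdec : ∀ i, 1 ≤ i → i ≤ n → d i < d (i - 1))
    (hdn : d n = 1)
    (htel : ∀ k, 1 ≤ k → k ≤ n →
      Λ k / d k ∈ AddSubmonoid.closure {x : ℕ | ∃ j < k, x = Λ j / d (k - 1)})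
    (S : AddSubmonoid ℕ)
    (hS : S = AddSubmonoid.closure {x : ℕ | ∃ i ≤ n, x = Λ i}) :
    ∃ c : ℕ, IsLeast {c' : ℕ | ∀ x : ℕ, c' ≤ x → x ∈ S} c ∧
      (c : ℤ) = (∑ k ∈ Finset.Icc 1 n, ((d (k - 1) / d k : ℕ) - 1 : ℤ) * (Λ k : ℤ))
        - (Λ 0 : ℤ) + 1 :=
  stmt_2_general n Λ hpos d hd hdn htel S hS
end

section
/- Every telescopic numerical semigroup is symmetric: if S is generated by a telescopic sequence Λ_0, ..., Λ_n (meaning that with d_i = gcd(Λ_0,...,Λ_i), each Λ_k/d_k lies in the semigroup generated by Λ_0/d_{k-1}, ..., Λ_{k-1}/d_{k-1}, and d_n = 1), then for F the Frobenius number of S and all integers x, x ∈ S if and only if F - x ∉ S. -/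
/-!
Induct on the length of the sequence. With `m = gcd(Λ₀, …, Λₙ)`, the semigroup generated by
`Λ₀, …, Λₙ₊₁` is the gluing `m T + ℕ Λₙ₊₁`, where `T` is generated by the telescopic sequence
`Λ₀/m, …, Λₙ/m`, and `Λₙ₊₁ ∈ T` is coprime to `m`. Every integer is uniquely `m q + a Λₙ₊₁`
with `0 ≤ a < m`, and it lies in the gluing iff `q ∈ T`. Reflection about
`m F_T + (m - 1) Λₙ₊₁` sends `(q, a)` to `(F_T - q, m - 1 - a)`, so the symmetry of `T` about
`F_T` passes to the gluing. A semigroup symmetric about `F` has Frobenius number `F`.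
-/

section IntDecomposition

variable {m l : ℕ}

lemma Int.exists_eq_mul_add_mul_of_coprime (hm : 0 < m) (hlm : Nat.Coprime l m) (x : ℤ) :
    ∃ q : ℤ, ∃ a < m, x = m * q + a * l := by
  obtain ⟨u, v, huv⟩ := Nat.isCoprime_iff_coprime.mpr hlm
  have hm' : (0 : ℤ) < m := by exact_mod_cast hm
  have hlt := Int.emod_lt_of_pos (x * u) hm'
  refine ⟨x * v + x * u / m * l, (x * u % m).toNat, by omega, ?_⟩
  rw [Int.toNat_of_nonneg (Int.emod_nonneg _ hm'.ne'), Int.emod_def]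
  linear_combination (-x) * huv

lemma Int.eq_of_mul_add_mul_eq (hlm : Nat.Coprime l m) {q q' : ℤ} {a a' : ℕ}
    (ha : a < m) (ha' : a' < m) (h : (m : ℤ) * q + a * l = m * q' + a' * l) : a = a' ∧ q = q' := by
  have hdvd : (m : ℤ) ∣ ((a : ℤ) - a') * l := ⟨q' - q, by linear_combination h⟩
  have haa' : (a : ℤ) - a' = 0 :=
    Int.eq_zero_of_abs_lt_dvd ((Nat.isCoprime_iff_coprime.mpr hlm).symm.dvd_of_dvd_mul_right hdvd)
      (abs_lt.mpr ⟨by omega, by omega⟩)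
  have hq : (m : ℤ) * q = m * q' := by linear_combination h - l * haa'
  exact ⟨by omega, mul_left_cancel₀ (by omega) hq⟩

end IntDecomposition

def IsSymmetricAbout (S : AddSubmonoid ℕ) (F : ℤ) : Prop :=
  ∀ x : ℤ, x ∈ ((↑) '' (S : Set ℕ) : Set ℤ) ↔ F - x ∉ ((↑) '' (S : Set ℕ) : Set ℤ)

lemma mem_natCast_image_iff {S : Set ℕ} {x : ℤ} :
    x ∈ ((↑) '' S : Set ℤ) ↔ 0 ≤ x ∧ x.toNat ∈ S := by
  constructor
  · rintro ⟨s, hs, rfl⟩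
    simpa
  · rintro ⟨hx, hs⟩
    exact ⟨x.toNat, hs, Int.toNat_of_nonneg hx⟩

lemma isSymmetricAbout_top : IsSymmetricAbout ⊤ (-1) := by
  intro x
  simp only [mem_natCast_image_iff, AddSubmonoid.coe_top, Set.mem_univ, and_true]
  omega

namespace IsSymmetricAbout

variable {S : AddSubmonoid ℕ} {F : ℤ}

theorem isGreatest (h : IsSymmetricAbout S F) :
    IsGreatest {x : ℤ | x < 0 ∨ x.toNat ∉ S} F := by
  have gaps : {x : ℤ | x < 0 ∨ x.toNat ∉ S} = ((↑) '' (S : Set ℕ))ᶜ := by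
    ext x
    simp only [Set.mem_ofPred_eq, Set.mem_compl_iff, mem_natCast_image_iff, SetLike.mem_coe,
      not_and_or, not_le]
  rw [gaps]
  refine ⟨fun hF ↦ (h F).mp hF ⟨0, S.zero_mem, by simp⟩, fun y hy ↦ ?_⟩
  by_contra! hFy
  obtain ⟨s, -, hs⟩ := not_not.mp (mt (h y).mpr hy)
  omega

end IsSymmetricAbout

def AddSubmonoid.glue (T : AddSubmonoid ℕ) (m l : ℕ) : AddSubmonoid ℕ :=
  T.map (AddMonoidHom.mulLeft m) ⊔ AddSubmonoid.closure {l}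

section Gluing

variable {m l : ℕ} {T : AddSubmonoid ℕ}

lemma AddSubmonoid.mem_glue_iff (hm : 0 < m) (hl : l ∈ T) {s : ℕ} :
    s ∈ T.glue m l ↔ ∃ t ∈ T, ∃ a < m, s = m * t + a * l := by
  simp only [AddSubmonoid.glue, AddSubmonoid.mem_sup, AddSubmonoid.mem_map,
    AddSubmonoid.mem_closure_singleton, AddMonoidHom.coe_mulLeft, smul_eq_mul]
  constructor
  · rintro ⟨_, ⟨t, ht, rfl⟩, _, ⟨c, rfl⟩, rfl⟩
    refine ⟨t + c / m * l, add_mem ht (nsmul_mem hl _), c % m, Nat.mod_lt c hm, ?_⟩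
    conv_lhs => rw [← Nat.div_add_mod c m]
    ring
  · rintro ⟨t, ht, a, -, rfl⟩
    exact ⟨m * t, ⟨t, ht, rfl⟩, a * l, ⟨a, rfl⟩, rfl⟩

lemma AddSubmonoid.mul_add_mul_mem_glue_iff (hm : 0 < m) (hl : l ∈ T) (hlm : Nat.Coprime l m)
    {q : ℤ} {a : ℕ} (ha : a < m) :
    (m * q + a * l : ℤ) ∈ ((↑) '' (T.glue m l : Set ℕ) : Set ℤ) ↔
      q ∈ ((↑) '' (T : Set ℕ) : Set ℤ) := by
  simp only [Set.mem_image, SetLike.mem_coe, AddSubmonoid.mem_glue_iff hm hl]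
  constructor
  · rintro ⟨_, ⟨t, ht, a', ha', rfl⟩, hs⟩
    refine ⟨t, ht, (Int.eq_of_mul_add_mul_eq hlm ha ha' ?_).2.symm⟩
    rw [← hs]
    push_cast
    ring
  · rintro ⟨t, ht, rfl⟩
    exact ⟨_, ⟨t, ht, a, ha, rfl⟩, by push_cast; ring⟩

theorem IsSymmetricAbout.glue {F : ℤ} (hT : IsSymmetricAbout T F) (hm : 0 < m) (hl : l ∈ T)
    (hlm : Nat.Coprime l m) :
    IsSymmetricAbout (T.glue m l) (m * F + (m - 1) * l) := by
  intro x
  obtain ⟨q, a, ha, rfl⟩ := Int.exists_eq_mul_add_mul_of_coprime hm hlm x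
  have hreflect : (m * F + (m - 1) * l - (m * q + a * l) : ℤ) = m * (F - q) + ↑(m - 1 - a) * l := by
    rw [Nat.cast_sub (by omega), Nat.cast_sub hm]
    ring
  rw [hreflect, AddSubmonoid.mul_add_mul_mem_glue_iff hm hl hlm ha,
    AddSubmonoid.mul_add_mul_mem_glue_iff hm hl hlm (by omega)]
  exact hT q

end Gluing

lemma Finset.gcd_eq_mul_gcd_div {ι : Type*} {s : Finset ι} {f : ι → ℕ} {m : ℕ}
    (h : ∀ i ∈ s, m ∣ f i) : s.gcd f = m * s.gcd (fun i ↦ f i / m) := by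
  have hmul := Finset.gcd_mul_left (s := s) (f := fun i ↦ f i / m) (a := m)
  rw [normalize_eq] at hmul
  rw [← hmul]
  exact Finset.gcd_congr rfl fun i hi ↦ (Nat.mul_div_cancel' (h i hi)).symm

def IsTelescopic (Λ : ℕ → ℕ) (n : ℕ) : Prop :=
  (Finset.range (n + 1)).gcd Λ = 1 ∧ ∀ k, 1 ≤ k → k ≤ n →
    Λ k / (Finset.range (k + 1)).gcd Λ ∈
      AddSubmonoid.closure {x | ∃ j < k, x = Λ j / (Finset.range k).gcd Λ}

namespace IsTelescopic

variable {Λ : ℕ → ℕ} {n : ℕ}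

lemma coprime_last (h : IsTelescopic Λ (n + 1)) :
    Nat.Coprime (Λ (n + 1)) ((Finset.range (n + 1)).gcd Λ) := by
  have h1 := h.1
  rwa [Finset.range_add_one, Finset.gcd_insert] at h1

lemma last_mem (h : IsTelescopic Λ (n + 1)) :
    Λ (n + 1) ∈ AddSubmonoid.closure {x | ∃ i ≤ n, x = Λ i / (Finset.range (n + 1)).gcd Λ} := by
  simpa [h.1, Nat.lt_succ_iff] using h.2 (n + 1) le_add_self le_rfl

lemma gcd_pos (h : IsTelescopic Λ (n + 1)) : 0 < (Finset.range (n + 1)).gcd Λ := by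
  by_contra! h0
  have hm : (Finset.range (n + 1)).gcd Λ = 0 := by omega
  have hbot : AddSubmonoid.closure {x | ∃ i ≤ n, x = Λ i / (Finset.range (n + 1)).gcd Λ} ≤ ⊥ :=
    AddSubmonoid.closure_le.mpr (by rintro _ ⟨i, -, rfl⟩; simp [hm])
  have hcop := h.coprime_last
  rw [hm, AddSubmonoid.mem_bot.mp (hbot h.last_mem)] at hcop
  exact absurd hcop (by decide)

lemma div_gcd (h : IsTelescopic Λ (n + 1)) :
    IsTelescopic (fun i ↦ Λ i / (Finset.range (n + 1)).gcd Λ) n := by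
  set m := (Finset.range (n + 1)).gcd Λ
  have hscale : ∀ k ≤ n + 1, (Finset.range k).gcd Λ = m * (Finset.range k).gcd (Λ · / m) :=
    fun k hk ↦ Finset.gcd_eq_mul_gcd_div fun i hi ↦ Finset.gcd_dvd (by simp at hi ⊢; omega)
  refine ⟨Nat.eq_of_mul_eq_mul_left h.gcd_pos ?_, fun k hk hkn ↦ ?_⟩
  · rw [← hscale (n + 1) le_rfl, mul_one]
  · have hscale_k := hscale k (by omega)
    have hscale_k1 := hscale (k + 1) (by omega)
    simp only [Nat.div_div_eq_div_mul, ← hscale_k, ← hscale_k1]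
    exact h.2 k hk (by omega)

end IsTelescopic

lemma closure_eq_glue {Λ : ℕ → ℕ} {n m : ℕ} (hdvd : ∀ i ≤ n, m ∣ Λ i) :
    AddSubmonoid.closure {x | ∃ i ≤ n + 1, x = Λ i} =
      (AddSubmonoid.closure {x | ∃ i ≤ n, x = Λ i / m}).glue m (Λ (n + 1)) := by
  rw [AddSubmonoid.glue, AddMonoidHom.map_mclosure, ← AddSubmonoid.closure_union]
  congr 1
  ext x
  simp only [Set.mem_ofPred_eq, Set.mem_union, Set.mem_image, Set.mem_singleton_iff,
    AddMonoidHom.coe_mulLeft]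
  constructor
  · rintro ⟨i, hi, rfl⟩
    rcases Nat.lt_succ_iff_lt_or_eq.mp (Nat.lt_succ_of_le hi) with hi | rfl
    · exact Or.inl ⟨_, ⟨i, by omega, rfl⟩, Nat.mul_div_cancel' (hdvd i (by omega))⟩
    · exact Or.inr rfl
  · rintro (⟨_, ⟨i, hi, rfl⟩, rfl⟩ | rfl)
    · exact ⟨i, by omega, Nat.mul_div_cancel' (hdvd i hi)⟩
    · exact ⟨n + 1, le_rfl, rfl⟩

theorem IsTelescopic.exists_isSymmetricAbout {Λ : ℕ → ℕ} {n : ℕ} (h : IsTelescopic Λ n) :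
    ∃ F, IsSymmetricAbout (AddSubmonoid.closure {x | ∃ i ≤ n, x = Λ i}) F := by
  induction n generalizing Λ with
  | zero =>
    have hΛ : Λ 0 = 1 := by simpa using h.1
    refine ⟨-1, ?_⟩
    convert isSymmetricAbout_top
    rw [eq_top_iff, ← Nat.addSubmonoidClosure_one]
    exact AddSubmonoid.closure_mono (by rintro _ rfl; exact ⟨0, le_rfl, hΛ.symm⟩)
  | succ n ih =>
    obtain ⟨F, hF⟩ := ih h.div_gcd
    rw [closure_eq_glue (m := (Finset.range (n + 1)).gcd Λ)
      fun i hi ↦ Finset.gcd_dvd (Finset.mem_range.mpr (by omega))]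
    exact ⟨_, hF.glue h.gcd_pos h.last_mem h.coprime_last⟩

theorem stmt_3_general (n : ℕ) (Λ : ℕ → ℕ)
    (d : ℕ → ℕ)
    (hd : ∀ i, i ≤ n → d i = (Finset.range (i + 1)).gcd Λ)
    (hdn : d n = 1)
    (htel : ∀ k, 1 ≤ k → k ≤ n →
      Λ k / d k ∈ AddSubmonoid.closure {x : ℕ | ∃ j < k, x = Λ j / d (k - 1)})
    (S : AddSubmonoid ℕ)
    (hS : S = AddSubmonoid.closure {x : ℕ | ∃ i ≤ n, x = Λ i})
    (F : ℤ)
    (hF : IsGreatest {x : ℤ | x < 0 ∨ x.toNat ∉ S} F) :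
    ∀ x : ℤ, (0 ≤ x ∧ x.toNat ∈ S) ↔ ¬(0 ≤ F - x ∧ (F - x).toNat ∈ S) := by
  have htelescopic : IsTelescopic Λ n := by
    refine ⟨hd n le_rfl ▸ hdn, fun k hk hkn ↦ ?_⟩
    have hk' := htel k hk hkn
    rwa [hd k hkn, hd (k - 1) (by omega), Nat.sub_add_cancel hk] at hk'
  obtain ⟨F', hsym⟩ := htelescopic.exists_isSymmetricAbout
  rw [← hS] at hsym
  obtain rfl := hF.unique hsym.isGreatest
  intro x
  simpa only [mem_natCast_image_iff, SetLike.mem_coe] using hsym x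

/-- Every telescopic numerical semigroup is symmetric: for `F` the Frobenius number,
`x ∈ S ↔ F - x ∉ S` for all integers `x`. -/
theorem stmt_3 (n : ℕ) (hn : 1 ≤ n) (Λ : ℕ → ℕ)
    (hpos : ∀ i, i ≤ n → 0 < Λ i)
    (d : ℕ → ℕ)
    (hd : ∀ i, i ≤ n → d i = (Finset.range (i + 1)).gcd Λ)
    (hdn : d n = 1)
    (htel : ∀ k, 1 ≤ k → k ≤ n →
      Λ k / d k ∈ AddSubmonoid.closure {x : ℕ | ∃ j < k, x = Λ j / d (k - 1)})
    (S : AddSubmonoid ℕ)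
    (hS : S = AddSubmonoid.closure {x : ℕ | ∃ i ≤ n, x = Λ i})
    (F : ℤ)
    (hF : IsGreatest {x : ℤ | x < 0 ∨ x.toNat ∉ S} F) :
    ∀ x : ℤ, (0 ≤ x ∧ x.toNat ∈ S) ↔ ¬(0 ≤ F - x ∧ (F - x).toNat ∈ S) :=
  stmt_3_general n Λ d hd hdn htel S hS F hF
end

section
/- Let k be a field, V a finite-dimensional k-vector space with a filtration given by a function v : V \ {0} → ℕ (a 'valuation') such that for each value m, the set {x ∈ V : x = 0 or v(x) ≤ m} is a subspace, and distinct one-dimensional 'graded pieces'. Suppose a group G acts k-linearly on V such that v(σ(x) - x) < v(x) for all σ ∈ G and x with σ(x) ≠ x (strictly decreasing filtration action). If V = W₁ ⊕ W₂ is a G-invariant decomposition with both W₁, W₂ nonzero, then both W₁ and W₂ contain a nonzero G-invariant vector. -/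
/-! A nonzero vector of minimal valuation in a `G`-stable subspace `W` is fixed by `G`: if
`σ x ≠ x`, then `σ x - x` would be a nonzero vector of `W` of strictly smaller valuation. -/

theorem Representation.exists_fixed_mem_of_sub_lt {k V G : Type*} [CommRing k] [AddCommGroup V]
    [Module k V] [Group G] (ρ : Representation k G V) (v : V → ℕ)
    (hdec : ∀ (σ : G) (x : V), ρ σ x ≠ x → v (ρ σ x - x) < v x)
    (W : Submodule k V) (hW : ∀ (σ : G), ∀ x ∈ W, ρ σ x ∈ W) (hne : W ≠ ⊥) :
    ∃ x ∈ W, x ≠ 0 ∧ ∀ σ : G, ρ σ x = x := by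
  obtain ⟨x, hxW, hx⟩ := Submodule.exists_mem_ne_zero_of_ne_bot hne
  induction hn : v x using Nat.strong_induction_on generalizing x with
  | _ n ih =>
    by_cases hfix : ∀ σ : G, ρ σ x = x
    · exact ⟨x, hxW, hx, hfix⟩
    obtain ⟨σ, hσ⟩ := not_forall.mp hfix
    exact ih _ (hn ▸ hdec σ x hσ) _ (W.sub_mem (hW σ x hxW) hxW) (sub_ne_zero.mpr hσ) rfl

theorem stmt_6_general (k : Type*) [Field k] (V : Type*) [AddCommGroup V] [Module k V]
    (G : Type*) [Group G]
    (ρ : Representation k G V)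
    (v : V → ℕ)
    (hdec : ∀ (σ : G) (x : V), ρ σ x ≠ x → v (ρ σ x - x) < v x)
    (W₁ W₂ : Submodule k V)
    (hW₁ : ∀ (σ : G), ∀ x ∈ W₁, ρ σ x ∈ W₁)
    (hW₂ : ∀ (σ : G), ∀ x ∈ W₂, ρ σ x ∈ W₂)
    (hne₁ : W₁ ≠ ⊥) (hne₂ : W₂ ≠ ⊥) :
    (∃ x ∈ W₁, x ≠ 0 ∧ ∀ σ : G, ρ σ x = x) ∧
    (∃ x ∈ W₂, x ≠ 0 ∧ ∀ σ : G, ρ σ x = x) :=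
  ⟨ρ.exists_fixed_mem_of_sub_lt v hdec W₁ hW₁ hne₁, ρ.exists_fixed_mem_of_sub_lt v hdec W₂ hW₂ hne₂⟩

/-- If a group acts linearly on a filtered finite-dimensional vector space, strictly
decreasing the valuation of `σ(x) - x`, then each summand of a `G`-invariant
direct sum decomposition `V = W₁ ⊕ W₂` with both parts nonzero contains a nonzero
`G`-invariant vector. -/
theorem stmt_6 (k : Type*) [Field k] (V : Type*) [AddCommGroup V] [Module k V]
    [FiniteDimensional k V] (G : Type*) [Group G]
    (ρ : Representation k G V)
    (v : V → ℕ)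
    (hsub : ∀ m : ℕ, ∃ U : Submodule k V, ∀ x : V, x ∈ U ↔ (x = 0 ∨ v x ≤ m))
    (hdec : ∀ (σ : G) (x : V), ρ σ x ≠ x → v (ρ σ x - x) < v x)
    (W₁ W₂ : Submodule k V)
    (hW₁ : ∀ (σ : G), ∀ x ∈ W₁, ρ σ x ∈ W₁)
    (hW₂ : ∀ (σ : G), ∀ x ∈ W₂, ρ σ x ∈ W₂)
    (hne₁ : W₁ ≠ ⊥) (hne₂ : W₂ ≠ ⊥)
    (hcompl : IsCompl W₁ W₂) :
    (∃ x ∈ W₁, x ≠ 0 ∧ ∀ σ : G, ρ σ x = x) ∧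
    (∃ x ∈ W₂, x ≠ 0 ∧ ∀ σ : G, ρ σ x = x) :=
  stmt_6_general k V G ρ v hdec W₁ W₂ hW₁ hW₂ hne₁ hne₂
end
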